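/- Exact cost difference in Theorem 2: let G be a connected simple graph on a finite vertex type, I ⊆ V the set of IC nodes forming a clique in G (every two distinct vertices of I are adjacent), L : V → V → ℝ a link-cost function and Γ ≥ 1 a real weight. Let j ∉ I be a non-IC node with deg_G(j) = 1 whose unique neighbor is some i ∈ I, and let i' ∈ I with i' ≠ i. Then the cost difference to i' of establishing a second IC link to j is exactly C(i', G+i'j) − C(i', G) = L(i', j) − 1 + (B_{G+i'j}(i') − B_G(i')). -/
import Mathlib


open SimpleGraph
open scoped Classical

noncomputable def bridging {V : Type*} [Fintype V] (G : SimpleGraph V) (i : V) : ℝ :=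
  (G.degree i : ℝ)⁻¹ / ∑ j ∈ G.neighborFinset i, (G.degree j : ℝ)⁻¹

noncomputable def addE {V : Type*} (G : SimpleGraph V) (i k : V) : SimpleGraph V :=
  G ⊔ fromEdgeSet {s(i, k)}

noncomputable def delE {V : Type*} (G : SimpleGraph V) (i k : V) : SimpleGraph V :=
  G.deleteEdges {s(i, k)}

noncomputable def cost {V : Type*} [Fintype V] (G : SimpleGraph V) (I : Set V)
    (L : V → V → ℝ) (Γ : ℝ) (i : V) : ℝ :=
  (∑ z ∈ G.neighborFinset i, L i z) + Γ * (∑ j ∈ I.toFinset, (G.dist i j : ℝ))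
    + (∑ k ∈ Iᶜ.toFinset, (G.dist i k : ℝ)) + bridging G i

lemma addE_adj {V : Type*} (G : SimpleGraph V) (i' j a b : V) :
    (addE G i' j).Adj a b ↔ G.Adj a b ∨ ((a = i' ∧ b = j ∨ a = j ∧ b = i') ∧ a ≠ b) := by
  simp only [addE, sup_adj, fromEdgeSet_adj, Set.mem_singleton_iff, Sym2.eq_iff]

lemma aux_dist_le {V : Type*} (G : SimpleGraph V) (hG : G.Connected)
    (i i' j : V) (hji : G.Adj j i) (hi'i : G.Adj i' i) (hnbr : G.neighborSet j = {i})
    (hi'j : i' ≠ j) :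
    ∀ n : ℕ, ∀ a b : V, a ≠ j → b ≠ j →
      ∀ w : (addE G i' j).Walk a b, w.length ≤ n → G.dist a b ≤ w.length := by
  intro n
  induction n with
  | zero =>
    intro a b ha hb w hw
    have hab : a = b := w.eq_of_length_eq_zero (Nat.le_zero.mp hw)
    subst hab
    simp [SimpleGraph.dist_self]
  | succ n ih =>
    intro a b ha hb w hw
    cases w with
    | nil => simp
    | @cons _ x _ h w' =>
      by_cases hx : x = j
      · subst hx
        cases w' with
        | nil => exact absurd rfl hb
        | @cons _ y _ h2 w'' =>
          have hy : y = i ∨ y = i' := by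
            rcases (addE_adj G i' x x y).mp h2 with h3 | ⟨h3, _⟩
            · left
              have : y ∈ G.neighborSet x := h3
              rw [hnbr] at this
              exact this
            · rcases h3 with ⟨h4, _⟩ | ⟨_, h5⟩
              · exact absurd h4.symm hi'j
              · exact Or.inr h5
          have hA : a = i ∨ a = i' := by
            rcases (addE_adj G i' x a x).mp h with h3 | ⟨h3, _⟩
            · left
              have : a ∈ G.neighborSet x := h3.symm
              rw [hnbr] at this
              exact this
            · rcases h3 with ⟨h4, _⟩ | ⟨h4, _⟩
              · exact Or.inr h4
              · exact absurd h4 ha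
          have hyne : y ≠ x := by
            rcases hy with rfl | rfl
            · exact hji.ne'
            · exact hi'j
          have hlen : w''.length ≤ n := by
            simp only [SimpleGraph.Walk.length_cons] at hw
            omega
          have hd1 : G.dist y b ≤ w''.length := ih y b hyne hb w'' hlen
          have hd0 : G.dist a y ≤ 1 := by
            rcases hA with rfl | rfl <;> rcases hy with rfl | rfl
            · simp [SimpleGraph.dist_self]
            · exact le_of_eq (SimpleGraph.dist_eq_one_iff_adj.mpr hi'i.symm)
            · exact le_of_eq (SimpleGraph.dist_eq_one_iff_adj.mpr hi'i)
            · simp [SimpleGraph.dist_self]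
          calc G.dist a b ≤ G.dist a y + G.dist y b := hG.dist_triangle
            _ ≤ 1 + w''.length := add_le_add hd0 hd1
            _ ≤ (SimpleGraph.Walk.cons h (SimpleGraph.Walk.cons h2 w'')).length := by
                simp only [SimpleGraph.Walk.length_cons]; omega
      · have hax : G.Adj a x := by
          rcases (addE_adj G i' j a x).mp h with h3 | ⟨h3, _⟩
          · exact h3
          · rcases h3 with ⟨_, h4⟩ | ⟨h4, _⟩
            · exact absurd h4 hx
            · exact absurd h4 ha
        have hlen : w'.length ≤ n := by
          simp only [SimpleGraph.Walk.length_cons] at hw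
          omega
        have hd1 : G.dist x b ≤ w'.length := ih x b hx hb w' hlen
        calc G.dist a b ≤ G.dist a x + G.dist x b := hG.dist_triangle
          _ ≤ 1 + w'.length := add_le_add
              (le_of_eq (SimpleGraph.dist_eq_one_iff_adj.mpr hax)) hd1
          _ = (SimpleGraph.Walk.cons h w').length := by
              simp [SimpleGraph.Walk.length_cons]; omega

theorem stmt7 {V : Type*} [Fintype V] (G : SimpleGraph V) (hG : G.Connected)
    (I : Set V) (hclique : ∀ a ∈ I, ∀ b ∈ I, a ≠ b → G.Adj a b)
    (L : V → V → ℝ) (Γ : ℝ) (hΓ : 1 ≤ Γ)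
    (j i i' : V) (hj : j ∉ I) (hi : i ∈ I) (hi' : i' ∈ I) (hii' : i' ≠ i)
    (hdeg : G.degree j = 1) (hnbr : G.neighborSet j = {i}) :
    cost (addE G i' j) I L Γ i' - cost G I L Γ i' =
      L i' j - 1 + (bridging (addE G i' j) i' - bridging G i') := by
  set G' := addE G i' j with hG'def
  have hji : G.Adj j i := by
    have : i ∈ G.neighborSet j := by rw [hnbr]; rfl
    exact this
  have hi'i : G.Adj i' i := hclique i' hi' i hi hii'
  have hi'j : i' ≠ j := fun h => hj (h ▸ hi')
  have hij : i ≠ j := hji.ne'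
  have hnadj : ¬ G.Adj i' j := by
    intro h
    have : i' ∈ G.neighborSet j := h.symm
    rw [hnbr] at this
    exact hii' this
  have hle : G ≤ G' := le_sup_left
  have hG'conn : G'.Connected := hG.mono hle
  have hadj' : G'.Adj i' j := by
    rw [hG'def, addE_adj]
    exact Or.inr ⟨Or.inl ⟨rfl, rfl⟩, hi'j⟩
  -- distances are preserved away from j
  have hdist_eq : ∀ k : V, k ≠ j → G'.dist i' k = G.dist i' k := by
    intro k hk
    refine le_antisymm ((hG.preconnected i' k).dist_anti hle) ?_
    obtain ⟨w, hw⟩ := hG'conn.exists_walk_length_eq_dist i' k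
    calc G.dist i' k ≤ w.length :=
          aux_dist_le G hG i i' j hji hi'i hnbr hi'j w.length i' k hi'j hk w le_rfl
      _ = G'.dist i' k := hw
  have hd1 : G'.dist i' j = 1 := SimpleGraph.dist_eq_one_iff_adj.mpr hadj'
  have hd2 : G.dist i' j = 2 := by
    have h0 : G.dist i' j ≠ 0 := by
      rw [ne_eq, hG.dist_eq_zero_iff]
      exact hi'j
    have h1 : G.dist i' j ≠ 1 := by
      rw [ne_eq, SimpleGraph.dist_eq_one_iff_adj]
      exact hnadj
    have h2 : G.dist i' j ≤ 2 := by
      have := SimpleGraph.dist_le (SimpleGraph.Walk.cons hi'i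
        (SimpleGraph.Walk.cons hji.symm SimpleGraph.Walk.nil))
      simpa using this
    omega
  -- neighbor finset of i' in G'
  have hnbr' : G'.neighborFinset i' = insert j (G.neighborFinset i') := by
    ext z
    rw [SimpleGraph.mem_neighborFinset, Finset.mem_insert, SimpleGraph.mem_neighborFinset,
      hG'def, addE_adj]
    constructor
    · rintro (h | ⟨(⟨-, rfl⟩ | ⟨h4, -⟩), hne⟩)
      · exact Or.inr h
      · exact Or.inl rfl
      · exact absurd h4 hi'j
    · rintro (rfl | h)
      · refine Or.inr ⟨Or.inl ⟨rfl, rfl⟩, hi'j⟩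
      · exact Or.inl h
  have hjnot : j ∉ G.neighborFinset i' := by
    rw [SimpleGraph.mem_neighborFinset]
    exact hnadj
  have hA : (∑ z ∈ G'.neighborFinset i', L i' z)
      = L i' j + ∑ z ∈ G.neighborFinset i', L i' z := by
    rw [hnbr', Finset.sum_insert hjnot]
  -- IC sum unchanged
  have hS : (∑ a ∈ I.toFinset, (G'.dist i' a : ℝ))
      = ∑ a ∈ I.toFinset, (G.dist i' a : ℝ) := by
    refine Finset.sum_congr rfl fun a ha => ?_
    have haI : a ∈ I := Set.mem_toFinset.mp ha
    have haj : a ≠ j := fun h => hj (h ▸ haI)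
    rw [hdist_eq a haj]
  -- non-IC sum decreases by 1
  have hjmem : j ∈ Iᶜ.toFinset := by
    rw [Set.mem_toFinset]
    exact hj
  have hT : (∑ k ∈ Iᶜ.toFinset, (G'.dist i' k : ℝ))
      = (∑ k ∈ Iᶜ.toFinset, (G.dist i' k : ℝ)) - 1 := by
    rw [← Finset.add_sum_erase _ _ hjmem, ← Finset.add_sum_erase _ _ hjmem, hd1, hd2]
    have : (∑ k ∈ Iᶜ.toFinset.erase j, (G'.dist i' k : ℝ))
        = ∑ k ∈ Iᶜ.toFinset.erase j, (G.dist i' k : ℝ) := by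
      refine Finset.sum_congr rfl fun k hk => ?_
      rw [hdist_eq k (Finset.ne_of_mem_erase hk)]
    rw [this]
    push_cast
    ring
  simp only [cost, hA, hS, hT]
  ring
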